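/- arXiv:2312.16049 — 5 statements merged into one kernel-verified Lean document; each statement's English description precedes it below -/
import Mathlib

section
/- Fix integers r ≥ 1 and a ≥ 1, and define recursively in ℚ⟦z⟧: φ_{−1} := z^a and, for m ≥ 0, φ_m := z·(1 − r·z^r)^{−1}·(d/dz φ_{m−1}). Then for every integer m ≥ −1 and every n ≥ 0, the coefficient of z^n in φ_m equals the (finite) sum over integers j ≥ 0 with j·r + a ≤ n of (a·(j·r + a)^{j+m}/j!) times the coefficient of z^{n−(j·r+a)} in exp(−(j·r+a)·z^r); in other words, coefficientwise in ℚ⟦z⟧ one has φ_m = Σ_{j ≥ 0} (a·(j·r+a)^{j+m}/j!)·(z·exp(−z^r))^{j·r+a}, where for j = 0 and m = −1 the factor a·(j·r+a)^{j+m} is interpreted as a·a^{−1} = 1 in ℚ. -/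
/-!
Write `x(z) = ln z − z^r`, so that `e^{N x} = z^N exp(−N z^r)` is a genuine power series of
order `N`. The operator `z (1 − r z^r)⁻¹ d/dz` is `d/dx`, hence multiplies `e^{N x}` by `N`.
So once `φ_{−1} = Σ_j w_j e^{N_j x}` with `N_j = jr + a` and `w_j = a N_j^{j−1}/j!`, applying
it `m + 1` times gives `φ_m = Σ_j N_j^{m+1} w_j e^{N_j x}`; the sums converge `z`-adically, so
every identity can be checked modulo `z^{n+1}` on finite partial sums. The base case
`Σ_j w_j e^{N_j x} = z^a` is Lagrange inversion for the curve: the coefficient of `z^{tr+a}` is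
`a/t!` times the `t`-th finite difference of the polynomial `j ↦ (jr + a)^{t−1}` of degree
`t − 1`, which vanishes for `t ≥ 1`.
-/

open PowerSeries

/-- The formal power series `exp (c · z^r)` in `ℚ⟦z⟧`. -/
noncomputable def expPow (c : ℚ) (r : ℕ) : PowerSeries ℚ :=
  PowerSeries.mk fun n => if r ∣ n then c ^ (n / r) / ((n / r).factorial : ℚ) else 0

/-- `phi r a k` is the series `φ_{k-1}^a`:  `φ_{-1} = z^a` and
`φ_m = z (1 - r z^r)⁻¹ (d/dz φ_{m-1})`. -/
noncomputable def phi (r a : ℕ) : ℕ → PowerSeries ℚ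
  | 0 => PowerSeries.X ^ a
  | k + 1 =>
      PowerSeries.X * (1 - (r : ℚ) • PowerSeries.X ^ r)⁻¹ *
        PowerSeries.derivative ℚ (phi r a k)

namespace PowerSeries

variable {R : Type*} [CommRing R]

theorem coeff_X_mul_derivative (f : R⟦X⟧) (n : ℕ) :
    coeff n (X * d⁄dX R f) = n * coeff n f := by
  cases n with
  | zero => simp
  | succ n => rw [coeff_succ_X_mul, coeff_derivative, mul_comm]; push_cast; rfl

theorem X_pow_dvd_X_mul_derivative {M : ℕ} {f : R⟦X⟧} (h : X ^ M ∣ f) :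
    X ^ M ∣ X * d⁄dX R f := by
  rw [X_pow_dvd_iff] at h ⊢
  intro m hm
  rw [coeff_X_mul_derivative, h m hm, mul_zero]

theorem coeff_eq_of_X_pow_dvd_sub {n : ℕ} {f g : R⟦X⟧} (h : X ^ (n + 1) ∣ f - g) :
    coeff n f = coeff n g :=
  sub_eq_zero.mp (by simpa using X_pow_dvd_iff.mp h n n.lt_succ_self)

theorem X_mul_derivative_X_pow (N : ℕ) :
    X * d⁄dX R ((X : R⟦X⟧) ^ N) = (N : R⟦X⟧) * X ^ N := by
  ext n
  rw [coeff_X_mul_derivative, ← map_natCast (C : R →+* R⟦X⟧), coeff_C_mul, coeff_X_pow]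
  split_ifs with h <;> simp [h]

end PowerSeries

@[simp]
theorem coeff_expPow (c : ℚ) (r n : ℕ) :
    coeff n (expPow c r) = if r ∣ n then c ^ (n / r) / ((n / r).factorial : ℚ) else 0 :=
  coeff_mk _ _

theorem natCast_mul_coeff_expPow (c : ℚ) {r : ℕ} (hr : 0 < r) (n : ℕ) :
    (n : ℚ) * coeff n (expPow c r) =
      if r ≤ n then c * r * coeff (n - r) (expPow c r) else 0 := by
  by_cases hrn : r ≤ n
  · obtain ⟨m, rfl⟩ := Nat.exists_eq_add_of_le hrn
    simp only [if_pos hrn, Nat.add_sub_cancel_left, coeff_expPow,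
      Nat.dvd_add_right (dvd_refl r)]
    split_ifs with hm
    · obtain ⟨q, rfl⟩ := hm
      rw [← mul_one_add, Nat.mul_div_cancel_left _ hr, Nat.mul_div_cancel_left _ hr,
        add_comm 1 q, Nat.factorial_succ]
      push_cast
      field_simp
      ring
    · simp
  · rw [if_neg hrn, coeff_expPow]
    split_ifs with hdvd
    · simp [Nat.eq_zero_of_dvd_of_lt hdvd (not_le.mp hrn)]
    · simp

theorem X_mul_derivative_expPow (c : ℚ) {r : ℕ} (hr : 0 < r) :
    X * d⁄dX ℚ (expPow c r) = C (c * r) * X ^ r * expPow c r := by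
  ext n
  rw [coeff_X_mul_derivative, natCast_mul_coeff_expPow c hr, mul_assoc (C _), coeff_C_mul,
    coeff_X_pow_mul', mul_ite, mul_zero]

/-- `expNx r N = e^{N x(z)} = (z e^{−z^r})^N`. -/
noncomputable def expNx (r N : ℕ) : ℚ⟦X⟧ :=
  X ^ N * expPow (-(N : ℚ)) r

theorem coeff_expNx (r N n : ℕ) :
    coeff n (expNx r N) = if N ≤ n then coeff (n - N) (expPow (-(N : ℚ)) r) else 0 :=
  coeff_X_pow_mul' _ _ _

theorem X_mul_derivative_expNx {r : ℕ} (hr : 0 < r) (N : ℕ) :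
    X * d⁄dX ℚ (expNx r N) = (N : ℚ) • ((1 - (r : ℚ) • X ^ r) * expNx r N) := by
  have hE := X_mul_derivative_expPow (-(N : ℚ)) hr
  have hXN := X_mul_derivative_X_pow (R := ℚ) N
  rw [← map_natCast (C : ℚ →+* ℚ⟦X⟧)] at hXN
  simp only [expNx, Derivation.leibniz, smul_eq_mul, smul_eq_C_mul, map_mul, map_neg] at hE ⊢
  linear_combination X ^ N * hE + expPow (-(N : ℚ)) r * hXN

theorem coeff_expNx_of_lt (r : ℕ) {N n : ℕ} (h : n < N) : coeff n (expNx r N) = 0 := by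
  rw [coeff_expNx, if_neg (not_le.mpr h)]

theorem coeff_expNx_add_mul {r : ℕ} (hr : 0 < r) (N i : ℕ) :
    coeff (N + i * r) (expNx r N) = (-(N : ℚ)) ^ i / (i.factorial : ℚ) := by
  rw [coeff_expNx, if_pos (Nat.le_add_right N _), Nat.add_sub_cancel_left, coeff_expPow,
    if_pos (dvd_mul_left r i), Nat.mul_div_cancel i hr]

theorem coeff_expNx_of_not_dvd (r : ℕ) {N n : ℕ} (h : ¬ r ∣ n - N) :
    coeff n (expNx r N) = 0 := by
  rw [coeff_expNx, coeff_expPow, if_neg h, ite_self]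

section expNxSum

variable (r : ℕ) (N : ℕ → ℕ) (w : ℕ → ℚ)

noncomputable def expNxPartialSum (M : ℕ) : ℚ⟦X⟧ :=
  ∑ j ∈ Finset.range M, w j • expNx r (N j)

/-- `Σ_j w_j e^{N_j x}`, with coefficient `n` read off the partial sum over `j ≤ n`: this is the
`z`-adic limit as soon as `j ≤ N j` (`X_pow_dvd_expNxSum_sub`). -/
noncomputable def expNxSum : ℚ⟦X⟧ :=
  mk fun n => coeff n (expNxPartialSum r N w (n + 1))

theorem coeff_expNxSum (n : ℕ) :
    coeff n (expNxSum r N w) = ∑ j ∈ Finset.range (n + 1), w j * coeff n (expNx r (N j)) := by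
  simp [expNxSum, expNxPartialSum]

variable {N}

theorem X_pow_dvd_expNxSum_sub (hN : ∀ j, j ≤ N j) (M : ℕ) :
    X ^ M ∣ expNxSum r N w - expNxPartialSum r N w M := by
  refine X_pow_dvd_iff.mpr fun m hm => ?_
  have htail : ∀ j ∈ Finset.Ico (m + 1) M, coeff m (w j • expNx r (N j)) = 0 := fun j hj => by
    have hjN : m < N j := (Nat.lt_of_succ_le (Finset.mem_Ico.mp hj).1).trans_le (hN j)
    rw [coeff_smul, coeff_expNx_of_lt r hjN, smul_zero]
  rw [map_sub, expNxSum, coeff_mk, expNxPartialSum, expNxPartialSum,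
    ← Finset.sum_range_add_sum_Ico _ (Nat.succ_le_of_lt hm), map_add,
    map_sum (coeff m) _ (Finset.Ico _ _), Finset.sum_eq_zero htail, add_zero, sub_self]

variable {r}

theorem X_mul_derivative_expNxPartialSum (hr : 0 < r) (M : ℕ) :
    X * d⁄dX ℚ (expNxPartialSum r N w M) =
      (1 - (r : ℚ) • X ^ r) * expNxPartialSum r N (fun j => N j * w j) M := by
  simp only [expNxPartialSum, map_sum, Finset.mul_sum, Derivation.map_smul, mul_smul_comm,
    X_mul_derivative_expNx hr, smul_smul, mul_comm (w _)]

theorem X_mul_derivative_expNxSum (hr : 0 < r) (hN : ∀ j, j ≤ N j) :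
    X * d⁄dX ℚ (expNxSum r N w) =
      (1 - (r : ℚ) • X ^ r) * expNxSum r N (fun j => N j * w j) := by
  ext n
  have hlhs := X_pow_dvd_X_mul_derivative (X_pow_dvd_expNxSum_sub r w hN (n + 1))
  have hrhs := (X_pow_dvd_expNxSum_sub r (fun j => N j * w j) hN (n + 1)).mul_left
    (1 - (r : ℚ) • X ^ r)
  rw [map_sub, mul_sub] at hlhs
  rw [mul_sub] at hrhs
  rw [coeff_eq_of_X_pow_dvd_sub hlhs, coeff_eq_of_X_pow_dvd_sub hrhs,
    X_mul_derivative_expNxPartialSum w hr]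

end expNxSum

theorem Polynomial.sum_range_alternating_choose_smul_eval_eq_zero {R : Type*} [CommRing R]
    {P : Polynomial R} {t : ℕ} (hP : P.natDegree < t) :
    ∑ j ∈ Finset.range (t + 1), ((-1 : ℤ) ^ (t - j) * t.choose j) • P.eval (j : R) = 0 := by
  have h := congr_fun (Polynomial.fwdDiff_iter_eq_zero_of_degree_lt hP) 0
  rw [fwdDiff_iter_eq_sum_shift] at h
  simpa only [zero_add, nsmul_eq_mul, mul_one, Pi.zero_apply] using h

theorem sum_range_alternating_choose_mul_affine_pow_eq_zero (r a : ℚ) {t : ℕ} (ht : 0 < t) :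
    ∑ j ∈ Finset.range (t + 1), (-1) ^ (t - j) * t.choose j * (r * j + a) ^ (t - 1) = 0 := by
  have hdeg : ((Polynomial.C r * Polynomial.X + Polynomial.C a) ^ (t - 1)).natDegree < t := by
    exact (Polynomial.natDegree_pow_le_of_le _ Polynomial.natDegree_linear_le).trans_lt (by omega)
  simpa only [Polynomial.eval_pow, Polynomial.eval_add, Polynomial.eval_mul, Polynomial.eval_C,
    Polynomial.eval_X, zsmul_eq_mul, Int.cast_mul, Int.cast_pow, Int.cast_neg, Int.cast_one,
    Int.cast_natCast] using Polynomial.sum_range_alternating_choose_smul_eval_eq_zero hdeg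

/-- The exponent lives in `ℤ` so that the weight of `j = k = 0` is `a · a⁻¹ = 1`. -/
noncomputable def phiWeight (r a k j : ℕ) : ℚ :=
  (a : ℚ) * ((j * r + a : ℕ) : ℚ) ^ ((j : ℤ) + (k : ℤ) - 1) / (j.factorial : ℚ)

theorem phiWeight_succ (r : ℕ) {a : ℕ} (ha : 0 < a) (k j : ℕ) :
    phiWeight r a (k + 1) j = ((j * r + a : ℕ) : ℚ) * phiWeight r a k j := by
  have hN : ((j * r + a : ℕ) : ℚ) ≠ 0 := by positivity
  rw [phiWeight, phiWeight, Nat.cast_succ, ← add_assoc, add_sub_right_comm, zpow_add_one₀ hN]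
  ring

theorem phiWeight_zero_mul {r a j t : ℕ} (ha : 0 < a) (hjt : j ≤ t) (ht : 0 < t) :
    phiWeight r a 0 j * ((-((j * r + a : ℕ) : ℚ)) ^ (t - j) / ((t - j).factorial : ℚ)) =
      a / t.factorial * ((-1) ^ (t - j) * t.choose j * (r * j + a) ^ (t - 1)) := by
  have hN : ((j * r + a : ℕ) : ℚ) ≠ 0 := by positivity
  have hpow : ((j * r + a : ℕ) : ℚ) ^ ((j : ℤ) + ((0 : ℕ) : ℤ) - 1) *
      ((j * r + a : ℕ) : ℚ) ^ (t - j) = ((j * r + a : ℕ) : ℚ) ^ (t - 1) := by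
    rw [← zpow_natCast, ← zpow_natCast, ← zpow_add₀ hN]
    congr 1
    push_cast [Nat.cast_sub hjt, Nat.cast_sub ht]
    ring
  have hcast : (r : ℚ) * j + a = ((j * r + a : ℕ) : ℚ) := by push_cast; ring
  rw [phiWeight, neg_pow, Nat.cast_choose ℚ hjt, hcast, ← hpow]
  field_simp

theorem expNxSum_phiWeight_zero {r a : ℕ} (hr : 0 < r) (ha : 0 < a) :
    expNxSum r (fun j => j * r + a) (phiWeight r a 0) = X ^ a := by
  ext n
  rw [coeff_expNxSum, coeff_X_pow]
  by_cases hn : ∃ t, n = t * r + a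
  · obtain ⟨t, rfl⟩ := hn
    have htail : ∀ j ∈ Finset.Ico (t + 1) (t * r + a + 1),
        phiWeight r a 0 j * coeff (t * r + a) (expNx r (j * r + a)) = 0 := fun j hj => by
      have : t * r < j * r := Nat.mul_lt_mul_of_pos_right (Finset.mem_Ico.mp hj).1 hr
      rw [coeff_expNx_of_lt r (by omega), mul_zero]
    rw [← Finset.sum_range_add_sum_Ico _ (by nlinarith : t + 1 ≤ t * r + a + 1),
      Finset.sum_eq_zero htail, add_zero]
    rcases t.eq_zero_or_pos with rfl | ht
    · have : (a : ℚ) ≠ 0 := by positivity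
      simp [phiWeight, coeff_expNx, this]
    · rw [if_neg (by nlinarith)]
      calc ∑ j ∈ Finset.range (t + 1),
              phiWeight r a 0 j * coeff (t * r + a) (expNx r (j * r + a))
          = ∑ j ∈ Finset.range (t + 1),
              (a : ℚ) / t.factorial *
                ((-1) ^ (t - j) * t.choose j * ((r : ℚ) * j + a) ^ (t - 1)) := by
            refine Finset.sum_congr rfl fun j hj => ?_
            have hjt : j ≤ t := Nat.lt_succ_iff.mp (Finset.mem_range.mp hj)
            have hn : t * r + a = (j * r + a) + (t - j) * r := by
              rw [Nat.sub_mul]; have := Nat.mul_le_mul_right r hjt; omega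
            rw [hn, coeff_expNx_add_mul hr, phiWeight_zero_mul ha hjt ht]
        _ = 0 := by
            rw [← Finset.mul_sum, sum_range_alternating_choose_mul_affine_pow_eq_zero _ _ ht,
              mul_zero]
  · rw [if_neg fun h => hn ⟨0, by omega⟩]
    refine Finset.sum_eq_zero fun j _ => ?_
    by_cases hj : j * r + a ≤ n
    · refine mul_eq_zero_of_right _ (coeff_expNx_of_not_dvd r fun ⟨q, hq⟩ => ?_)
      exact hn ⟨q + j, by rw [add_mul, mul_comm q]; omega⟩
    · rw [coeff_expNx_of_lt r (not_le.mp hj), mul_zero]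

theorem phi_eq_expNxSum {r a : ℕ} (hr : 0 < r) (ha : 0 < a) (k : ℕ) :
    phi r a k = expNxSum r (fun j => j * r + a) (phiWeight r a k) := by
  induction k with
  | zero => exact (expNxSum_phiWeight_zero hr ha).symm
  | succ k ih =>
    have hunit : constantCoeff (1 - (r : ℚ) • X ^ r : ℚ⟦X⟧) ≠ 0 := by simp [hr.ne']
    have hweight :
        (fun j => ((j * r + a : ℕ) : ℚ) * phiWeight r a k j) = phiWeight r a (k + 1) :=
      funext fun j => (phiWeight_succ r ha k j).symm
    rw [phi, ih, mul_right_comm,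
      X_mul_derivative_expNxSum _ hr fun j => Nat.le_add_right_of_le (Nat.le_mul_of_pos_right j hr),
      mul_comm, ← mul_assoc, PowerSeries.inv_mul_cancel _ hunit, one_mul, hweight]

/-- For every `m ≥ -1` (written as `m = k - 1` with `k : ℕ`) and every `n ≥ 0`,
the coefficient of `z^n` in `φ_m` equals the finite sum over `j ≥ 0` with
`j·r + a ≤ n` of `(a·(jr+a)^{j+m}/j!)` times the coefficient of
`z^{n-(jr+a)}` in `exp(−(jr+a)·z^r)`. -/
theorem statement0 (r a : ℕ) (hr : 1 ≤ r) (ha : 1 ≤ a) (k n : ℕ) :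
    PowerSeries.coeff n (phi r a k) =
      ∑ j ∈ Finset.range (n + 1),
        if j * r + a ≤ n then
          (a : ℚ) * ((j * r + a : ℕ) : ℚ) ^ ((j : ℤ) + (k : ℤ) - 1) / (j.factorial : ℚ) *
            PowerSeries.coeff (n - (j * r + a)) (expPow (-((j * r + a : ℕ) : ℚ)) r)
        else 0 := by
  rw [phi_eq_expNxSum hr ha, coeff_expNxSum]
  refine Finset.sum_congr rfl fun j _ => ?_
  rw [coeff_expNx, mul_ite, mul_zero, phiWeight]
end

section
/- Let d ≥ 2, r ≥ 1, k ≥ 1 be integers, A a commutative ℚ-algebra, t, p_1, …, p_{d−1} ∈ A, and p_d ∈ A a unit. Then for every integer m ≥ 1, the coefficient of u^m in the formal power series Σ_{n ≥ 0} binom(−k/r, n)·(Σ_{j=1}^{d−1} (t·p_j·p_d^{−1})·u^{d−j})^n ∈ A⟦u⟧ equals Σ_β (−1)^{ℓ(β)}·t^{ℓ(β)}·p_d^{−ℓ(β)}·[k/r]_{ℓ(β)}·(Π_{i=1}^{ℓ(β)} p_{d−β_i})/|Aut β|, where the sum runs over all partitions β of m whose parts are all at most d − 1. -/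
/-!
Reflecting `j ↦ d - j` turns the inner sum into `Σ_{i=1}^{d-1} c_i u^i` with
`c_i = t p_{d-i} p_d⁻¹`. By the multinomial theorem, the coefficient of `u^m` in its `n`-th power
is a sum over multisets of `n` parts in `[1, d - 1]` adding up to `m`, i.e. over partitions `β` of
`m` with `n` parts `≤ d - 1`, of `(n! / |Aut β|) Π c_{β_i}`; and `binom(-x, n) n! = (-1)^n [x]_n`.
-/

open PowerSeries

/-- Generalized binomial coefficient `binom(α, n) = (1/n!)·Π_{i=0}^{n−1}(α − i)` for `α ∈ ℚ`. -/
noncomputable def qbinom (α : ℚ) (n : ℕ) : ℚ :=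
  (∏ i ∈ Finset.range n, (α - (i : ℚ))) / (n.factorial : ℚ)

/-- Rising factorial `[x]_ℓ = x(x+1)⋯(x+ℓ−1)`. -/
noncomputable def risingFac (x : ℚ) (l : ℕ) : ℚ :=
  ∏ i ∈ Finset.range l, (x + (i : ℚ))

/-- `|Aut β| = Π_{v} m_v(β)!` for a partition given as a multiset of parts. -/
def autCard (β : Multiset ℕ) : ℕ :=
  ∏ v ∈ β.toFinset, (β.count v).factorial

open Finset

theorem PowerSeries.prod_map_monomial {ι R : Type*} [CommSemiring R] (s : Multiset ι)
    (e : ι → ℕ) (c : ι → R) :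
    (s.map fun j => monomial (e j) (c j)).prod = monomial (s.map e).sum (s.map c).prod := by
  induction s using Multiset.induction with
  | empty => simp
  | cons a s ih => simp [ih, monomial_mul_monomial]

theorem PowerSeries.coeff_sum_monomial_pow {ι R : Type*} [DecidableEq ι] [CommSemiring R]
    (s : Finset ι) (e : ι → ℕ) (c : ι → R) (n m : ℕ) :
    coeff m ((∑ j ∈ s, monomial (e j) (c j)) ^ n) =
      ∑ σ ∈ s.sym n with (σ.1.map e).sum = m, σ.1.countPerms * (σ.1.map c).prod := by
  rw [sum_pow, map_sum, sum_filter]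
  refine sum_congr rfl fun σ _ => ?_
  rw [prod_map_monomial, ← nsmul_eq_mul, map_nsmul, coeff_monomial, nsmul_eq_mul, mul_ite,
    mul_zero]
  exact if_congr eq_comm rfl rfl

theorem Nat.Partition.card_parts_le {m : ℕ} (β : m.Partition) : Multiset.card β.parts ≤ m := by
  simpa [β.parts_sum] using Multiset.card_nsmul_le_sum fun x hx => β.parts_pos hx

theorem Nat.Partition.sum_filter_card_eq_sum_sym {M : Type*} [AddCommMonoid M] (m d n : ℕ)
    (f : Multiset ℕ → M) :
    ∑ β ∈ {β : m.Partition | ∀ x ∈ β.parts, x ≤ d} with Multiset.card β.parts = n, f β.parts =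
      ∑ σ ∈ (Icc 1 d).sym n with σ.1.sum = m, f σ.1 := by
  have mem_Icc_of_mem {σ : Sym ℕ n} (hσ : σ ∈ (Icc 1 d).sym n) {x : ℕ} (hx : x ∈ σ.1) :
      1 ≤ x ∧ x ≤ d :=
    mem_Icc.1 (mem_sym_iff.1 hσ x hx)
  refine sum_bij' (fun β hβ => ⟨β.parts, (mem_filter.1 hβ).2⟩)
    (fun σ hσ => ⟨σ.1, fun hx => (mem_Icc_of_mem (mem_filter.1 hσ).1 hx).1,
      (mem_filter.1 hσ).2⟩) ?_ ?_
    (fun _ _ => rfl) (fun _ _ => rfl) (fun _ _ => rfl)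
  · intro β hβ
    have hd : ∀ x ∈ β.parts, x ≤ d := (mem_filter.1 (mem_filter.1 hβ).1).2
    exact mem_filter.2
      ⟨mem_sym_iff.2 fun x hx => mem_Icc.2 ⟨β.parts_pos hx, hd x hx⟩, β.parts_sum⟩
  · intro σ hσ
    exact mem_filter.2
      ⟨mem_filter.2 ⟨mem_univ _, fun x hx => (mem_Icc_of_mem (mem_filter.1 hσ).1 hx).2⟩, σ.2⟩

theorem autCard_mul_countPerms (s : Multiset ℕ) :
    autCard s * s.countPerms = (Multiset.card s).factorial := by
  have hperms : s.countPerms = Nat.multinomial s.toFinset s.count := by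
    rw [Multiset.countPerms, Finsupp.multinomial_eq]
    rfl
  rw [hperms, autCard, Nat.multinomial_spec, Multiset.toFinset_sum_count_eq]

theorem qbinom_neg (x : ℚ) (n : ℕ) : qbinom (-x) n = (-1) ^ n * risingFac x n / n.factorial := by
  rw [qbinom, risingFac, ← card_range n, ← prod_const, card_range, ← prod_mul_distrib]
  congr 1
  exact prod_congr rfl fun i _ => by ring

theorem qbinom_neg_mul_countPerms (x : ℚ) (s : Multiset ℕ) :
    qbinom (-x) (Multiset.card s) * s.countPerms =
      risingFac x (Multiset.card s) / autCard s * (-1) ^ Multiset.card s := by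
  have hfac : (autCard s : ℚ) * s.countPerms = (Multiset.card s).factorial := by
    exact_mod_cast autCard_mul_countPerms s
  have hne : (autCard s : ℚ) * s.countPerms ≠ 0 :=
    hfac ▸ Nat.cast_ne_zero.2 (Nat.factorial_ne_zero _)
  have haut := left_ne_zero_of_mul hne
  have hperm := right_ne_zero_of_mul hne
  rw [qbinom_neg, ← hfac]
  field_simp

theorem qbinom_neg_smul_countPerms_mul_prod {A : Type*} [CommRing A] [Algebra ℚ A] (x : ℚ)
    (s : Multiset ℕ) (t u : A) (q : ℕ → A) :
    qbinom (-x) (Multiset.card s) • ((s.countPerms : A) * (s.map fun i => t * q i * u).prod) =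
      (risingFac x (Multiset.card s) / autCard s) •
        ((-1) ^ Multiset.card s * t ^ Multiset.card s * u ^ Multiset.card s * (s.map q).prod) := by
  set n := Multiset.card s
  have hprod : (s.map fun i => t * q i * u).prod = t ^ n * u ^ n * (s.map q).prod := by
    rw [Multiset.prod_map_mul, Multiset.prod_map_mul, Multiset.map_const', Multiset.map_const',
      Multiset.prod_replicate, Multiset.prod_replicate]
    ring
  calc _ = (qbinom (-x) n * s.countPerms) • (t ^ n * u ^ n * (s.map q).prod) := by
        rw [hprod, mul_smul, Nat.cast_smul_eq_nsmul, nsmul_eq_mul]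
    _ = (risingFac x n / autCard s * (-1) ^ n) • (t ^ n * u ^ n * (s.map q).prod) := by
        rw [qbinom_neg_mul_countPerms]
    _ = _ := by
        rw [mul_smul, Algebra.smul_def ((-1 : ℚ) ^ n), map_pow, map_neg, map_one]
        ring_nf

theorem statement3_general (A : Type*) [CommRing A] [Algebra ℚ A] (d r k : ℕ)
    (t : A) (p : ℕ → A) (pdInv : A) (m : ℕ) :
    ∑ n ∈ Finset.range (m + 1),
        qbinom (-(k : ℚ) / (r : ℚ)) n •
          PowerSeries.coeff (R := A) m
            ((∑ j ∈ Finset.Icc 1 (d - 1),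
                PowerSeries.monomial (R := A) (d - j) (t * p j * pdInv)) ^ n) =
      ∑ β ∈ Finset.univ.filter (fun β : Nat.Partition m => ∀ x ∈ β.parts, x ≤ d - 1),
        (risingFac ((k : ℚ) / (r : ℚ)) (Multiset.card β.parts) / (autCard β.parts : ℚ)) •
          ((-1 : A) ^ Multiset.card β.parts * t ^ Multiset.card β.parts *
            pdInv ^ Multiset.card β.parts * (β.parts.map fun i => p (d - i)).prod) := by
  have hreflect : ∑ j ∈ Icc 1 (d - 1), monomial (d - j) (t * p j * pdInv) =
      ∑ i ∈ Icc 1 (d - 1), monomial i (t * p (d - i) * pdInv) := by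
    have hinv : ∀ j ∈ Icc 1 (d - 1), d - j ∈ Icc 1 (d - 1) ∧ d - (d - j) = j := fun j hj => by
      rw [mem_Icc] at hj ⊢
      omega
    exact sum_nbij' (d - ·) (d - ·) (fun j hj => (hinv j hj).1) (fun j hj => (hinv j hj).1)
      (fun j hj => (hinv j hj).2) (fun j hj => (hinv j hj).2) fun j hj => by rw [(hinv j hj).2]
  simp only [hreflect, coeff_sum_monomial_pow, Multiset.map_id', smul_sum, neg_div]
  symm
  rw [← sum_fiberwise_of_maps_to (t := range (m + 1)) fun β _ =>
    mem_range_succ_iff.2 β.card_parts_le]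
  refine sum_congr rfl fun n _ => ?_
  refine (Nat.Partition.sum_filter_card_eq_sum_sym m (d - 1) n fun s =>
    (risingFac (k / r) (Multiset.card s) / autCard s) • ((-1) ^ Multiset.card s *
      t ^ Multiset.card s * pdInv ^ Multiset.card s * (s.map fun i => p (d - i)).prod)).trans ?_
  refine sum_congr rfl fun ⟨s, hs⟩ _ => ?_
  subst hs
  exact (qbinom_neg_smul_countPerms_mul_prod _ _ _ _ _).symm

theorem statement3 (A : Type*) [CommRing A] [Algebra ℚ A] (d r k : ℕ)
    (hd : 2 ≤ d) (hr : 1 ≤ r) (hk : 1 ≤ k) (t : A) (p : ℕ → A) (pdInv : A)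
    (hpd : p d * pdInv = 1) (m : ℕ) (hm : 1 ≤ m) :
    ∑ n ∈ Finset.range (m + 1),
        qbinom (-(k : ℚ) / (r : ℚ)) n •
          PowerSeries.coeff (R := A) m
            ((∑ j ∈ Finset.Icc 1 (d - 1),
                PowerSeries.monomial (R := A) (d - j) (t * p j * pdInv)) ^ n) =
      ∑ β ∈ Finset.univ.filter (fun β : Nat.Partition m => ∀ x ∈ β.parts, x ≤ d - 1),
        (risingFac ((k : ℚ) / (r : ℚ)) (Multiset.card β.parts) / (autCard β.parts : ℚ)) •
          ((-1 : A) ^ Multiset.card β.parts * t ^ Multiset.card β.parts *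
            pdInv ^ Multiset.card β.parts * (β.parts.map fun i => p (d - i)).prod) :=
  statement3_general A d r k t p pdInv m
end

section
/- Let R be a commutative ring, n ≥ 1 an integer, and x_1, …, x_n ∈ R. Let M be the n×n matrix whose (i, j) entry, for 1 ≤ i, j ≤ n, is the elementary symmetric polynomial e_{i−1} evaluated at the n − 1 elements x_1, …, x_n with x_j omitted (with the convention e_0 = 1). Then det M = Π_{1 ≤ j < l ≤ n} (x_j − x_l). -/
/-!
Since `∏_{l ≠ j} (1 + x_l T) = (1 + x_j T)⁻¹ ∏_l (1 + x_l T)`, the entry `e_i(x without x_j)`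
equals `∑_{k ≤ i} e_{i-k}(x) (-x_j)^k`. So the matrix factors as a unitriangular matrix times the
transposed Vandermonde matrix of `-x`, whose determinant is `∏_{j < l} (x_j - x_l)`.
-/

open Finset Matrix

namespace Multiset

variable {R : Type*} [CommRing R]

@[simp]
theorem esymm_zero (s : Multiset R) : s.esymm 0 = 1 := by
  simp [esymm]

theorem esymm_cons_succ (a : R) (s : Multiset R) (k : ℕ) :
    (a ::ₘ s).esymm (k + 1) = s.esymm (k + 1) + a * s.esymm k := by
  simp [esymm, powersetCard_cons, sum_map_mul_left]

theorem esymm_eq_sum_neg_pow_mul_esymm_cons (a : R) (s : Multiset R) (i : ℕ) :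
    s.esymm i = ∑ k ∈ Finset.range (i + 1), (-a) ^ k * (a ::ₘ s).esymm (i - k) := by
  induction i with
  | zero => simp
  | succ i ih =>
    calc s.esymm (i + 1) = (a ::ₘ s).esymm (i + 1) + -a * s.esymm i := by
          rw [esymm_cons_succ]; ring
      _ = _ := by
          rw [ih, mul_sum, sum_range_succ' _ (i + 1)]
          simp only [Nat.add_sub_add_right, pow_succ', mul_assoc, pow_zero, one_mul, Nat.sub_zero]
          ring

end Multiset

theorem Fin.sum_ite_le_eq_sum_range {M : Type*} [AddCommMonoid M] {n : ℕ} (f : ℕ → M)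
    (i : Fin n) : ∑ k : Fin n, (if (k : ℕ) ≤ i then f k else 0) = ∑ k ∈ range (i + 1), f k := by
  rw [Fin.sum_univ_eq_sum_range (fun k => if k ≤ (i : ℕ) then f k else 0), ← sum_filter]
  congr 1
  ext k; simp; omega

theorem statement4_general (R : Type*) [CommRing R] (n : ℕ) (x : Fin n → R) :
    Matrix.det
        (Matrix.of fun i j : Fin n =>
          ∑ t ∈ (Finset.univ.erase j).powersetCard (i : ℕ), ∏ l ∈ t, x l) =
      ∏ j : Fin n, ∏ l ∈ Finset.Ioi j, (x j - x l) := by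
  set E : ℕ → R := (univ.val.map x).esymm
  set L : Matrix (Fin n) (Fin n) R := of fun i k => if (k : ℕ) ≤ i then E (i - k) else 0
  have hL : L.det = 1 := by
    rw [det_of_isLowerTriangular L fun i k hik => if_neg (not_le.mpr hik)]
    simp [L, E]
  have hfactor : (of fun i j : Fin n =>
      ∑ t ∈ (univ.erase j).powersetCard (i : ℕ), ∏ l ∈ t, x l) = L * (vandermonde (-x))ᵀ := by
    ext i j
    have hcons : x j ::ₘ (univ.erase j).val.map x = univ.val.map x := by
      rw [← Multiset.map_cons, ← insert_val_of_notMem (notMem_erase j univ),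
        insert_erase (mem_univ j)]
    simp only [of_apply, mul_apply, transpose_apply, vandermonde_apply, L, ite_mul, zero_mul]
    rw [Fin.sum_ite_le_eq_sum_range (fun k => E (i - k) * (-x) j ^ k), ← esymm_map_val,
      Multiset.esymm_eq_sum_neg_pow_mul_esymm_cons (x j), hcons]
    exact sum_congr rfl fun k _ => mul_comm _ _
  rw [hfactor, det_mul, hL, one_mul, det_transpose, det_vandermonde]
  simp only [Pi.neg_apply, neg_sub_neg]

theorem statement4 (R : Type*) [CommRing R] (n : ℕ) (hn : 1 ≤ n) (x : Fin n → R) :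
    Matrix.det
        (Matrix.of fun i j : Fin n =>
          ∑ t ∈ (Finset.univ.erase j).powersetCard (i : ℕ), ∏ l ∈ t, x l) =
      ∏ j : Fin n, ∏ l ∈ Finset.Ioi j, (x j - x l) :=
  statement4_general R n x
end

section
/- Let s ≥ 2 be an integer and ν a nonempty partition (finite multiset of positive integers) that is bounded in the sense that the sum of any two of its parts taken at distinct positions is at least s (i.e. whenever a sub-multiset {x, y} of size two is contained in ν, one has x + y ≥ s). Suppose ν is the multiset sum ν = ρ^{(1)} + ⋯ + ρ^{(k)} of nonempty partitions ρ^{(1)}, …, ρ^{(k)} each of total size |ρ^{(c)}| ≤ s − 1. Then each ρ^{(c)} consists of exactly one part, and k = ℓ(ν). -/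
/-!
A block `ρ^{(c)}` with two parts `x, y` would give `s ≤ x + y ≤ |ρ^{(c)}| ≤ s - 1`,
since `{x, y}` is also a sub-multiset of `ν`. So every block is a singleton, and then
`ℓ(ν) = ∑ c, ℓ(ρ^{(c)}) = k`.
-/

namespace Multiset

variable {α : Type*}

theorem exists_pair_le_of_one_lt_card {m : Multiset α} (h : 1 < card m) :
    ∃ x y, ({x, y} : Multiset α) ≤ m := by
  have hne : powersetCard 2 m ≠ 0 := by
    rw [← card_pos, card_powersetCard]
    exact Nat.choose_pos h
  obtain ⟨t, ht⟩ := exists_mem_of_ne_zero hne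
  obtain ⟨hle, hcard⟩ := mem_powersetCard.mp ht
  obtain ⟨x, y, rfl⟩ := card_eq_two.mp hcard
  exact ⟨x, y, hle⟩

theorem sum_le_sum_of_le [AddCommMonoid α] [Preorder α] [CanonicallyOrderedAdd α]
    {s t : Multiset α} (h : s ≤ t) : s.sum ≤ t.sum := by
  obtain ⟨u, rfl⟩ := le_iff_exists_add.mp h
  simp

theorem card_eq_one_of_sum_lt_of_forall_pair_le [AddCommMonoid α] [Preorder α]
    [CanonicallyOrderedAdd α] {b : α} {m : Multiset α} (hm : m ≠ 0)
    (hpair : ∀ x y, ({x, y} : Multiset α) ≤ m → b ≤ x + y) (hsum : m.sum < b) :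
    card m = 1 := by
  by_contra hne
  obtain ⟨x, y, hxy⟩ :=
    exists_pair_le_of_one_lt_card (lt_of_le_of_ne (card_pos.mpr hm) (Ne.symm hne))
  have hxy_sum : x + y ≤ m.sum := by simpa using sum_le_sum_of_le hxy
  exact lt_irrefl _ (((hpair x y hxy).trans hxy_sum).trans_lt hsum)

end Multiset

theorem statement5_general (s : ℕ) (hs : 2 ≤ s) (ν : Multiset ℕ)
    (hbdd : ∀ x y : ℕ, ({x, y} : Multiset ℕ) ≤ ν → s ≤ x + y)
    (k : ℕ) (ρ : Fin k → Multiset ℕ)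
    (hρne : ∀ c, ρ c ≠ 0)
    (hρsize : ∀ c, (ρ c).sum ≤ s - 1)
    (hsum : ν = ∑ c, ρ c) :
    (∀ c, Multiset.card (ρ c) = 1) ∧ k = Multiset.card ν := by
  have hρle : ∀ c, ρ c ≤ ν := fun c ↦
    hsum ▸ Finset.single_le_sum (fun _ _ ↦ zero_le) (Finset.mem_univ c)
  have hsingleton : ∀ c, Multiset.card (ρ c) = 1 := fun c ↦
    Multiset.card_eq_one_of_sum_lt_of_forall_pair_le (hρne c)
      (fun x y hxy ↦ hbdd x y (hxy.trans (hρle c))) (by have := hρsize c; omega)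
  refine ⟨hsingleton, ?_⟩
  simp [hsum, Multiset.card_sum, hsingleton]

theorem statement5 (s : ℕ) (hs : 2 ≤ s) (ν : Multiset ℕ)
    (hpos : ∀ x ∈ ν, 0 < x) (hne : ν ≠ 0)
    (hbdd : ∀ x y : ℕ, ({x, y} : Multiset ℕ) ≤ ν → s ≤ x + y)
    (k : ℕ) (ρ : Fin k → Multiset ℕ)
    (hρne : ∀ c, ρ c ≠ 0) (hρpos : ∀ c, ∀ x ∈ ρ c, 0 < x)
    (hρsize : ∀ c, (ρ c).sum ≤ s - 1)
    (hsum : ν = ∑ c, ρ c) :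
    (∀ c, Multiset.card (ρ c) = 1) ∧ k = Multiset.card ν :=
  statement5_general s hs ν hbdd k ρ hρne hρsize hsum
end

section
/- There exists a unique Z ∈ R with Z − z ∈ t·R such that Z = z·exp( σ·p_d·(Q(Z)^d − Q(z)^d) + t·σ·P̃(Q(Z)) ). Moreover, this Z satisfies Z − z ∈ K⟦z^{−1}⟧⟦t⟧, i.e. for every l ≥ 0 the coefficient of t^l in Z − z is a formal power series in z^{−1} (has no positive powers of z). -/
/-!
STATEMENT 7.  Exponentiated form of the characterization (lncarac) of the proof
of Lemma 4.2: with `L = K((z⁻¹))` the field of formal Laurent series in `z⁻¹`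
and `R = L⟦t⟧`, there is a unique `Z ∈ R` with `Z − z ∈ t·R` such that
`Z = z·exp(σ·p_d·(Q(Z)^d − Q(z)^d) + t·σ·P̃(Q(Z)))`; moreover every coefficient
of `t^l` in `Z − z` lies in `K⟦z⁻¹⟧ ⊆ L`.

We realize `L` as `LaurentSeries K` with variable `z⁻¹` (so `z` is the Hahn
series supported at `−1`, and `K⟦z⁻¹⟧` is the range of
`HahnSeries.ofPowerSeries ℤ K`), and `R` as `PowerSeries L` with variable `t`.
For `h ∈ t·R`, `exp h = Σ_n h^n/n!` is computed coefficientwise (the `n ≤ m`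
truncation computes the coefficient of `t^m` since `h^n ∈ t^n·R`).
-/

open PowerSeries

/-- The formal exponential on `L⟦t⟧`, intended for arguments in `t·L⟦t⟧`. -/
noncomputable def pexpL (L : Type*) [Field L] (F : PowerSeries L) : PowerSeries L :=
  PowerSeries.mk fun n =>
    ∑ k ∈ Finset.range (n + 1), ((k.factorial : L))⁻¹ * PowerSeries.coeff n (F ^ k)

/-- The element `z = (z⁻¹)⁻¹` of `L = K((z⁻¹))`. -/
noncomputable def zElem (K : Type*) [Field K] : LaurentSeries K :=
  HahnSeries.single (-1 : ℤ) (1 : K)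

/-- The canonical map `K → R = L⟦t⟧`. -/
noncomputable def cK (K : Type*) [Field K] : K →+* PowerSeries (LaurentSeries K) :=
  (PowerSeries.C : LaurentSeries K →+* PowerSeries (LaurentSeries K)).comp HahnSeries.C

/-!
Write `Ψ(Z) = z·exp(F(Z))` for the right-hand side, where `F(Z) = A(Z) - A(z) + t·B(Z)` with
`A = σ p_d Q^d` and `B = σ P̃ ∘ Q`. On series with constant term `z`, `Ψ` has a `t`-adic
derivative which is the constant `μ = z·A'(z)`: `Ψ(Z) - Ψ(Z') ≡ μ(Z - Z')` modulo `t^(N+2)`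
whenever `Z ≡ Z'` modulo `t^(N+1)`. As `μ ≠ 1`, Newton's map `Z ↦ Z - (1 - μ)⁻¹(Z - Ψ(Z))` is a
`t`-adic contraction, whence existence and uniqueness.

For integrality, let `v` be the valuation of `K((z⁻¹))` with `v(z) > 1`. Comparing coefficients
of `t^(l+1)` in `Z = Ψ(Z)` gives `(1 - μ)·Z_{l+1} = z·(F(Y)_{l+1} + E_{l+1})`, where `Y` is the
truncation of `Z` below `t^(l+1)` and `E` is the exponential of that of `F(Z)`. Here
`v(1 - μ) = v(z)^(sd)`, the coefficients of `F(Y)` have valuation at most `v(z)^(sd-1)` once those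
of `Y - z` are integral, and `E` is integral once the lower coefficients of `F(Z)` are; so the
coefficients of `Z - z` and of `F(Z)` are integral by a joint induction.
-/

namespace PowerSeries

section XAdicDeriv

variable {L : Type*} [CommRing L]

theorem eq_of_forall_X_pow_dvd_sub {f g : L⟦X⟧} (h : ∀ n, X ^ n ∣ f - g) : f = g := by
  ext n
  rw [← sub_eq_zero, ← map_sub]
  exact X_pow_dvd_iff.mp (h (n + 1)) n n.lt_succ_self

theorem exists_forall_X_pow_dvd_sub {u : ℕ → L⟦X⟧} (hu : ∀ n, X ^ n ∣ u (n + 1) - u n) :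
    ∃ f, ∀ n, X ^ n ∣ f - u n := by
  have hcauchy (n k : ℕ) : X ^ n ∣ u (n + k) - u n := by
    induction k with
    | zero => simp
    | succ k ih =>
      rw [← sub_add_sub_cancel, ← add_assoc]
      exact dvd_add ((pow_dvd_pow X (by omega)).trans (hu (n + k))) ih
  refine ⟨mk fun m => coeff m (u (m + 1)), fun n => X_pow_dvd_iff.mpr fun m hm => ?_⟩
  obtain ⟨k, rfl⟩ := Nat.exists_eq_add_of_lt hm
  have h := X_pow_dvd_iff.mp (hcauchy (m + 1) k) m m.lt_succ_self
  rw [map_sub, show m + 1 + k = m + k + 1 by omega] at h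
  rw [map_sub, coeff_mk]
  linear_combination -h

theorem existsUnique_isFixedPt_of_contracting (c : L)
    {Φ : L⟦X⟧ → L⟦X⟧} (hc : ∀ f, constantCoeff f = c → constantCoeff (Φ f) = c)
    (hΦ : ∀ N f g, constantCoeff f = c → constantCoeff g = c → X ^ (N + 1) ∣ f - g →
      X ^ (N + 2) ∣ Φ f - Φ g) :
    ∃! f, constantCoeff f = c ∧ Function.IsFixedPt Φ f := by
  have contract (N : ℕ) {f g : L⟦X⟧} (hf : constantCoeff f = c) (hg : constantCoeff g = c)
      (hfg : X ^ N ∣ f - g) : X ^ (N + 1) ∣ Φ f - Φ g := by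
    obtain _ | N := N
    · rw [zero_add, pow_one, X_dvd_iff, map_sub, hc f hf, hc g hg, sub_self]
    · exact hΦ N f g hf hg hfg
  set u : ℕ → L⟦X⟧ := fun n => Φ^[n] (C c)
  have hu (n : ℕ) : constantCoeff (u n) = c := by
    induction n with
    | zero => exact constantCoeff_C c
    | succ n ih => simpa only [u, Function.iterate_succ_apply'] using hc _ ih
  have hstep (n : ℕ) : X ^ n ∣ u (n + 1) - u n := by
    induction n with
    | zero => exact one_dvd _
    | succ n ih =>
      simpa only [u, Function.iterate_succ_apply'] using contract n (hu (n + 1)) (hu n) ih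
  obtain ⟨f, hf⟩ := exists_forall_X_pow_dvd_sub hstep
  have hf0 : constantCoeff f = c := by
    rw [← hu 1, ← sub_eq_zero, ← map_sub, ← X_dvd_iff]
    simpa using hf 1
  have hfix : Function.IsFixedPt Φ f := by
    refine eq_of_forall_X_pow_dvd_sub fun n => ?_
    have h := contract n hf0 (hu n) (hf n)
    rw [show Φ (u n) = u (n + 1) from (Function.iterate_succ_apply' Φ n (C c)).symm] at h
    rw [show Φ f - f = (Φ f - u (n + 1)) + (u (n + 1) - u n) - (f - u n) by ring]
    exact dvd_sub (dvd_add ((pow_dvd_pow X n.le_succ).trans h) (hstep n)) (hf n)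
  refine ⟨f, ⟨hf0, hfix⟩, fun g ⟨hg, hgfix⟩ => eq_of_forall_X_pow_dvd_sub fun n => ?_⟩
  induction n with
  | zero => exact one_dvd _
  | succ n ih => simpa only [hgfix.eq, hfix.eq] using contract n hg hf0 ih

theorem constantCoeff_aeval {K : Type*} [CommRing K] [Algebra K L] (P : Polynomial K)
    (f : L⟦X⟧) : constantCoeff (Polynomial.aeval f P) = Polynomial.aeval (constantCoeff f) P := by
  rw [Polynomial.aeval_def, Polynomial.hom_eval₂, Polynomial.aeval_def]
  congr 1

def HasXAdicDerivAt (Φ : L⟦X⟧ → L⟦X⟧) (c μ : L) : Prop :=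
  ∀ (N : ℕ) (f g : L⟦X⟧), constantCoeff f = c → constantCoeff g = c → X ^ (N + 1) ∣ f - g →
    X ^ (N + 2) ∣ Φ f - Φ g - C μ * (f - g)

variable {Φ Ψ : L⟦X⟧ → L⟦X⟧} {c c' μ ν : L}

theorem hasXAdicDerivAt_aeval {K : Type*} [CommRing K] [Algebra K L] (P : Polynomial K) (c : L) :
    HasXAdicDerivAt (fun f => Polynomial.aeval f P) c
      (Polynomial.aeval c P.derivative) := by
  intro N f g hf hg hfg
  obtain ⟨k, hk⟩ := (P.map (algebraMap K L⟦X⟧)).binomExpansion g (f - g)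
  simp only [add_sub_cancel, Polynomial.derivative_map, Polynomial.eval_map_algebraMap] at hk
  set μ := Polynomial.aeval c P.derivative
  have hslope : X ∣ Polynomial.aeval g P.derivative - C μ := by
    rw [X_dvd_iff, map_sub, constantCoeff_aeval, hg, constantCoeff_C, sub_self]
  have hsq : X ^ (N + 2) ∣ (f - g) ^ 2 :=
    (pow_dvd_pow (X : L⟦X⟧) (by omega : N + 2 ≤ (N + 1) * 2)).trans
      (pow_mul (X : L⟦X⟧) (N + 1) 2 ▸ pow_dvd_pow_of_dvd hfg 2)
  have hlin : Polynomial.aeval f P - Polynomial.aeval g P - C μ * (f - g)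
      = (Polynomial.aeval g P.derivative - C μ) * (f - g) + k * (f - g) ^ 2 := by
    rw [hk]; ring
  simp only [hlin]
  exact dvd_add (by rw [pow_succ']; exact mul_dvd_mul hslope hfg) (dvd_mul_of_dvd_right hsq k)

theorem HasXAdicDerivAt.X_pow_dvd_sub (hΦ : HasXAdicDerivAt Φ c μ) {N : ℕ} {f g : L⟦X⟧}
    (hf : constantCoeff f = c) (hg : constantCoeff g = c) (hfg : X ^ (N + 1) ∣ f - g) :
    X ^ (N + 1) ∣ Φ f - Φ g := by
  have h := dvd_add ((pow_dvd_pow X N.succ.le_succ).trans (hΦ N f g hf hg hfg))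
    (dvd_mul_of_dvd_right hfg (C μ))
  rwa [sub_add_cancel] at h

theorem HasXAdicDerivAt.comp (hΨ : HasXAdicDerivAt Ψ c' ν) (hΦ : HasXAdicDerivAt Φ c μ)
    (hΦc : ∀ f, constantCoeff f = c → constantCoeff (Φ f) = c') :
    HasXAdicDerivAt (Ψ ∘ Φ) c (ν * μ) := by
  intro N f g hf hg hfg
  have h := dvd_add (hΨ N _ _ (hΦc f hf) (hΦc g hg) (hΦ.X_pow_dvd_sub hf hg hfg))
    (dvd_mul_of_dvd_right (hΦ N f g hf hg hfg) (C ν))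
  convert h using 1
  simp only [Function.comp_apply, map_mul]
  ring

theorem HasXAdicDerivAt.const_mul (hΦ : HasXAdicDerivAt Φ c μ) (a : L) :
    HasXAdicDerivAt (fun f => C a * Φ f) c (a * μ) := by
  intro N f g hf hg hfg
  convert dvd_mul_of_dvd_right (hΦ N f g hf hg hfg) (C a) using 1
  simp only [map_mul]
  ring

theorem HasXAdicDerivAt.add (hΦ : HasXAdicDerivAt Φ c μ) (hΨ : HasXAdicDerivAt Ψ c ν) :
    HasXAdicDerivAt (fun f => Φ f + Ψ f) c (μ + ν) := by
  intro N f g hf hg hfg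
  convert dvd_add (hΦ N f g hf hg hfg) (hΨ N f g hf hg hfg) using 1
  simp only [map_add]
  ring

theorem HasXAdicDerivAt.sub_const (hΦ : HasXAdicDerivAt Φ c μ) (a : L⟦X⟧) :
    HasXAdicDerivAt (fun f => Φ f - a) c μ := by
  intro N f g hf hg hfg
  simpa only [sub_sub_sub_cancel_right] using hΦ N f g hf hg hfg

theorem HasXAdicDerivAt.X_mul (hΦ : HasXAdicDerivAt Φ c μ) :
    HasXAdicDerivAt (fun f => X * Φ f) c 0 := by
  intro N f g hf hg hfg
  rw [map_zero, zero_mul, sub_zero, ← mul_sub, pow_succ']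
  exact mul_dvd_mul_left X (hΦ.X_pow_dvd_sub hf hg hfg)

theorem HasXAdicDerivAt.coeff_succ (hΦ : HasXAdicDerivAt Φ c μ) {f : L⟦X⟧}
    (hf : constantCoeff f = c) (n : ℕ) :
    coeff (n + 1) (Φ f) = coeff (n + 1) (Φ (trunc (n + 1) f)) + μ * coeff (n + 1) f := by
  have htrunc : constantCoeff (trunc (n + 1) f : L⟦X⟧) = c := by
    rw [← coeff_zero_eq_constantCoeff_apply, coeff_coe_trunc_of_lt n.succ_pos,
      coeff_zero_eq_constantCoeff_apply, hf]
  have hdvd : X ^ (n + 1) ∣ f - (trunc (n + 1) f : L⟦X⟧) := by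
    refine X_pow_dvd_iff.mpr fun m hm => ?_
    rw [map_sub, coeff_coe_trunc_of_lt hm, sub_self]
  have h := X_pow_dvd_iff.mp (hΦ n f _ hf htrunc hdvd) (n + 1) (by omega)
  rw [map_sub, map_sub, coeff_C_mul, map_sub, Polynomial.coeff_coe, coeff_trunc,
    if_neg (lt_irrefl _), sub_zero] at h
  linear_combination h

end XAdicDeriv

section Field

variable {L : Type*} [Field L]

theorem hasXAdicDerivAt_pexpL : HasXAdicDerivAt (pexpL L) 0 1 := by
  intro N f g hf hg hfg
  -- for `k ≥ 2`, `x ↦ x ^ k` has derivative `0` at `0`, so only the linear term of `exp` survives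
  have hpow (k : ℕ) (hk : k ≠ 1) (m : ℕ) (hm : m < N + 2) : coeff m (f ^ k) = coeff m (g ^ k) := by
    obtain _ | k := k
    · simp
    have h := X_pow_dvd_iff.mp
      (hasXAdicDerivAt_aeval (Polynomial.X ^ (k + 1) : Polynomial L) 0 N f g hf hg hfg) m hm
    simpa [zero_pow (show k ≠ 0 by omega), sub_eq_zero] using h
  refine X_pow_dvd_iff.mpr fun m hm => ?_
  simp only [map_sub, pexpL, coeff_mk, map_one, one_mul, ← Finset.sum_sub_distrib, ← mul_sub]
  rw [Finset.sum_eq_single 1 (fun k _ hk => by rw [hpow k hk m hm, sub_self, mul_zero])]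
  · simp
  · intro h1
    obtain rfl : m = 0 := by simpa using h1
    rw [← coeff_zero_eq_constantCoeff_apply] at hf hg
    simp [hf, hg]

theorem HasXAdicDerivAt.existsUnique_isFixedPt {Ψ : L⟦X⟧ → L⟦X⟧} {c μ : L}
    (hΨ : HasXAdicDerivAt Ψ c μ) (hc : ∀ f, constantCoeff f = c → constantCoeff (Ψ f) = c)
    (hμ : μ ≠ 1) : ∃! f, constantCoeff f = c ∧ Function.IsFixedPt Ψ f := by
  have hunit : C (1 - μ)⁻¹ * (1 - C μ) = 1 := by
    rw [← map_one C, ← map_sub, ← map_mul, inv_mul_cancel₀ (sub_ne_zero.mpr hμ.symm)]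
  -- Newton's map for `f = Ψ f`, which is `X`-adically contracting
  set Φ : L⟦X⟧ → L⟦X⟧ := fun f => f - C (1 - μ)⁻¹ * (f - Ψ f)
  have hfix (f : L⟦X⟧) : Function.IsFixedPt Φ f ↔ Function.IsFixedPt Ψ f := by
    rw [Function.IsFixedPt, Function.IsFixedPt, sub_eq_self, mul_eq_zero, sub_eq_zero,
      or_iff_right ((map_ne_zero C).mpr (inv_ne_zero (sub_ne_zero.mpr hμ.symm))), eq_comm]
  have hΦ (f g : L⟦X⟧) : Φ f - Φ g = C (1 - μ)⁻¹ * (Ψ f - Ψ g - C μ * (f - g)) := by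
    linear_combination (g - f) * hunit
  have hΦc (f : L⟦X⟧) (hf : constantCoeff f = c) : constantCoeff (Φ f) = c := by
    simp [Φ, hf, hc f hf]
  simpa only [hfix] using existsUnique_isFixedPt_of_contracting c hΦc
    fun N f g hf hg hfg => hΦ f g ▸ dvd_mul_of_dvd_right (hΨ N f g hf hg hfg) _

end Field

section Bounds

variable {L Γ₀ : Type*} [CommRing L] [LinearOrderedCommGroupWithZero Γ₀]

noncomputable def boundedCoeffs (v : Valuation L Γ₀) (γ : Γ₀) : AddSubgroup L⟦X⟧ :=
  ⨅ n, (v.leAddSubgroup γ).comap (coeff n).toAddMonoidHom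

variable {v : Valuation L Γ₀} {γ δ : Γ₀} {f g : L⟦X⟧}

theorem mem_boundedCoeffs : f ∈ boundedCoeffs v γ ↔ ∀ n, v (coeff n f) ≤ γ := by
  simp [boundedCoeffs]

theorem boundedCoeffs_mono (h : γ ≤ δ) : boundedCoeffs v γ ≤ boundedCoeffs v δ :=
  fun _ hf => mem_boundedCoeffs.mpr fun n => (mem_boundedCoeffs.mp hf n).trans h

theorem C_mem_boundedCoeffs {a : L} (ha : v a ≤ γ) : C a ∈ boundedCoeffs v γ := by
  refine mem_boundedCoeffs.mpr fun n => ?_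
  rw [coeff_C]
  split_ifs <;> simp [ha]

theorem X_mem_boundedCoeffs : (X : L⟦X⟧) ∈ boundedCoeffs v 1 := by
  refine mem_boundedCoeffs.mpr fun n => ?_
  rw [coeff_X]
  split_ifs <;> simp

theorem mul_mem_boundedCoeffs (hf : f ∈ boundedCoeffs v γ) (hg : g ∈ boundedCoeffs v δ) :
    f * g ∈ boundedCoeffs v (γ * δ) := by
  refine mem_boundedCoeffs.mpr fun n => ?_
  rw [coeff_mul]
  refine v.map_sum_le fun p _ => ?_
  rw [map_mul]
  exact mul_le_mul' (mem_boundedCoeffs.mp hf _) (mem_boundedCoeffs.mp hg _)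

theorem pow_mem_boundedCoeffs (hf : f ∈ boundedCoeffs v γ) (n : ℕ) :
    f ^ n ∈ boundedCoeffs v (γ ^ n) := by
  induction n with
  | zero => simpa using C_mem_boundedCoeffs (v := v) (a := 1) (by simp)
  | succ n ih => rw [pow_succ, pow_succ]; exact mul_mem_boundedCoeffs ih hf

theorem coe_trunc_mem_boundedCoeffs {n : ℕ} (hf : ∀ m < n, v (coeff m f) ≤ γ) :
    (trunc n f : L⟦X⟧) ∈ boundedCoeffs v γ := by
  refine mem_boundedCoeffs.mpr fun m => ?_
  rw [Polynomial.coeff_coe, coeff_trunc]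
  split_ifs with hm
  · exact hf m hm
  · simp

variable {K : Type*} [CommRing K] [Algebra K L] (hK : ∀ a : K, v (algebraMap K L a) ≤ 1)
include hK

theorem algebraMap_mem_boundedCoeffs (a : K) : algebraMap K L⟦X⟧ a ∈ boundedCoeffs v 1 := by
  rw [algebraMap_apply]
  exact C_mem_boundedCoeffs (hK a)

theorem aeval_mem_boundedCoeffs (hγ : 1 ≤ γ) {P : Polynomial K} {n : ℕ}
    (hP : P.natDegree ≤ n) (hf : f ∈ boundedCoeffs v γ) :
    Polynomial.aeval f P ∈ boundedCoeffs v (γ ^ n) := by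
  rw [Polynomial.aeval_eq_sum_range]
  refine AddSubgroup.sum_mem _ fun i hi => ?_
  have hin : i ≤ n := by rw [Finset.mem_range] at hi; omega
  rw [Algebra.smul_def]
  refine boundedCoeffs_mono ?_ (mul_mem_boundedCoeffs (algebraMap_mem_boundedCoeffs hK _)
    (pow_mem_boundedCoeffs hf i))
  rw [one_mul]
  exact pow_le_pow_right₀ hγ hin

theorem aeval_sub_aeval_mem_boundedCoeffs (hγ : 1 ≤ γ) {P : Polynomial K} {n : ℕ}
    (hP : P.natDegree ≤ n + 1) (hf : f ∈ boundedCoeffs v γ) (hg : g ∈ boundedCoeffs v γ)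
    (hfg : f - g ∈ boundedCoeffs v δ) :
    Polynomial.aeval f P - Polynomial.aeval g P ∈ boundedCoeffs v (γ ^ n * δ) := by
  rw [Polynomial.aeval_eq_sum_range, Polynomial.aeval_eq_sum_range, ← Finset.sum_sub_distrib]
  refine AddSubgroup.sum_mem _ fun i hi => ?_
  have hin : i ≤ n + 1 := by rw [Finset.mem_range] at hi; omega
  have hgeom : ∑ j ∈ Finset.range i, f ^ j * g ^ (i - 1 - j) ∈ boundedCoeffs v (γ ^ n) := by
    refine AddSubgroup.sum_mem _ fun j hj => ?_
    have hji : j + (i - 1 - j) ≤ n := by rw [Finset.mem_range] at hj; omega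
    exact boundedCoeffs_mono (pow_add γ j _ ▸ pow_le_pow_right₀ hγ hji)
      (mul_mem_boundedCoeffs (pow_mem_boundedCoeffs hf j) (pow_mem_boundedCoeffs hg _))
  rw [← smul_sub, ← geom_sum₂_mul, Algebra.smul_def, ← one_mul (γ ^ n * δ)]
  exact mul_mem_boundedCoeffs (algebraMap_mem_boundedCoeffs hK _)
    (mul_mem_boundedCoeffs hgeom hfg)

end Bounds

theorem pexpL_mem_boundedCoeffs {K L Γ₀ : Type*} [Field K] [Field L] [Algebra K L]
    [LinearOrderedCommGroupWithZero Γ₀] {v : Valuation L Γ₀}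
    (hK : ∀ a : K, v (algebraMap K L a) ≤ 1) {f : L⟦X⟧} (hf : f ∈ boundedCoeffs v 1) :
    pexpL L f ∈ boundedCoeffs v 1 := by
  refine mem_boundedCoeffs.mpr fun n => ?_
  rw [pexpL, coeff_mk]
  refine v.map_sum_le fun k _ => ?_
  rw [map_mul, ← map_natCast (algebraMap K L), ← map_inv₀]
  exact mul_le_one' (hK _) (by simpa using mem_boundedCoeffs.mp (pow_mem_boundedCoeffs hf k) n)

end PowerSeries

namespace Valuation

variable {K L Γ₀ : Type*} [Field K] [CommRing L] [Algebra K L]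
  [LinearOrderedCommGroupWithZero Γ₀] {v : Valuation L Γ₀}
  (hK : ∀ a : K, v (algebraMap K L a) ≤ 1)
include hK

theorem map_algebraMap_eq_one {a : K} (ha : a ≠ 0) : v (algebraMap K L a) = 1 := by
  refine le_antisymm (hK a) ?_
  calc 1 = v (algebraMap K L a) * v (algebraMap K L a⁻¹) := by
        rw [← map_mul, ← map_mul, mul_inv_cancel₀ ha, map_one, map_one]
    _ ≤ v (algebraMap K L a) * 1 := mul_le_mul' le_rfl (hK _)
    _ = v (algebraMap K L a) := mul_one _

theorem map_aeval_eq_pow_natDegree {z : L} (hz : 1 < v z) {P : Polynomial K} (hP : P ≠ 0) :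
    v (Polynomial.aeval z P) = v z ^ P.natDegree := by
  classical
  have hlead : v (P.coeff P.natDegree • z ^ P.natDegree) = v z ^ P.natDegree := by
    rw [Algebra.smul_def, map_mul, map_pow, Polynomial.coeff_natDegree,
      map_algebraMap_eq_one hK (Polynomial.leadingCoeff_ne_zero.mpr hP), one_mul]
  rw [Polynomial.aeval_eq_sum_range, v.map_sum_eq_of_lt (Finset.self_mem_range_succ _), hlead]
  intro i hi
  have hi' : i < P.natDegree := by
    simp only [Finset.mem_sdiff, Finset.mem_range, Finset.mem_singleton] at hi; omega
  rw [hlead, Algebra.smul_def, map_mul, map_pow]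
  calc v (algebraMap K L (P.coeff i)) * v z ^ i ≤ 1 * v z ^ i := mul_le_mul' (hK _) le_rfl
    _ < v z ^ P.natDegree := by rw [one_mul]; exact pow_lt_pow_right₀ hz hi'

end Valuation

namespace PowerSeries

section Deformation

variable {K L : Type*} [Field K] [Field L] [Algebra K L] (z₀ : L) (A B : Polynomial K)

/-- With `A = σ p_d Q^d` and `B = σ P̃ ∘ Q`, this is `V_t(f) - V_0(z₀)` for the potential
`V_t = A + t B`, so that `f = z₀ · exp (potentialShift z₀ A B f)` is the exponentiated
characterization (lncarac). -/
noncomputable def potentialShift (f : L⟦X⟧) : L⟦X⟧ :=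
  Polynomial.aeval f A - Polynomial.aeval (C z₀) A + X * Polynomial.aeval f B

noncomputable def deformationMap (f : L⟦X⟧) : L⟦X⟧ :=
  C z₀ * pexpL L (potentialShift z₀ A B f)

variable {z₀ A B} {f : L⟦X⟧}

theorem constantCoeff_potentialShift (hf : constantCoeff f = z₀) :
    constantCoeff (potentialShift z₀ A B f) = 0 := by
  simp [potentialShift, constantCoeff_aeval, hf]

theorem constantCoeff_deformationMap (f : L⟦X⟧) : constantCoeff (deformationMap z₀ A B f) = z₀ := by
  rw [deformationMap, map_mul, constantCoeff_C, ← coeff_zero_eq_constantCoeff_apply, pexpL,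
    coeff_mk]
  simp

theorem hasXAdicDerivAt_potentialShift :
    HasXAdicDerivAt (potentialShift z₀ A B) z₀ (Polynomial.aeval z₀ A.derivative) :=
  add_zero (Polynomial.aeval z₀ A.derivative) ▸
    ((hasXAdicDerivAt_aeval A z₀).sub_const _).add (hasXAdicDerivAt_aeval B z₀).X_mul

theorem hasXAdicDerivAt_deformationMap :
    HasXAdicDerivAt (deformationMap z₀ A B) z₀
      (z₀ * Polynomial.aeval z₀ A.derivative) :=
  one_mul (Polynomial.aeval z₀ A.derivative) ▸
    (hasXAdicDerivAt_pexpL.comp hasXAdicDerivAt_potentialShift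
      fun _ hf => constantCoeff_potentialShift hf).const_mul z₀

theorem existsUnique_isFixedPt_deformationMap
    (hμ : z₀ * Polynomial.aeval z₀ A.derivative ≠ 1) :
    ∃! f, constantCoeff f = z₀ ∧ Function.IsFixedPt (deformationMap z₀ A B) f :=
  hasXAdicDerivAt_deformationMap.existsUnique_isFixedPt
    (fun f _ => constantCoeff_deformationMap f) hμ

theorem coeff_succ_of_isFixedPt (hf0 : constantCoeff f = z₀)
    (hf : Function.IsFixedPt (deformationMap z₀ A B) f) (n : ℕ) :
    coeff (n + 1) f = z₀ * (coeff (n + 1) (pexpL L (trunc (n + 1) (potentialShift z₀ A B f)))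
      + coeff (n + 1) (potentialShift z₀ A B f)) := by
  have h := hasXAdicDerivAt_pexpL.coeff_succ (constantCoeff_potentialShift (A := A) (B := B) hf0) n
  rw [one_mul] at h
  rw [← h, ← coeff_C_mul]
  exact (congrArg (coeff (n + 1)) hf).symm

section Integrality

variable {Γ₀ : Type*} [LinearOrderedCommGroupWithZero Γ₀] {v : Valuation L Γ₀}
  (hK : ∀ a : K, v (algebraMap K L a) ≤ 1) (hz : 1 ≤ v z₀) {n : ℕ}
  (hA : A.natDegree ≤ n + 1) (hB : B.natDegree ≤ n)
include hK hz hA hB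

theorem potentialShift_mem_boundedCoeffs (hf : f - C z₀ ∈ boundedCoeffs v 1) :
    potentialShift z₀ A B f ∈ boundedCoeffs v (v z₀ ^ n) := by
  have hz₀ : C z₀ ∈ boundedCoeffs v (v z₀) := C_mem_boundedCoeffs le_rfl
  have hfz : f ∈ boundedCoeffs v (v z₀) := by
    simpa using add_mem (boundedCoeffs_mono hz hf) hz₀
  refine add_mem (by simpa using aeval_sub_aeval_mem_boundedCoeffs hK hz hA hfz hz₀ hf) ?_
  simpa using mul_mem_boundedCoeffs X_mem_boundedCoeffs (aeval_mem_boundedCoeffs hK hz hB hfz)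

theorem valuation_coeff_succ_le_one_of_isFixedPt
    (hμ : v z₀ ^ (n + 1) ≤ v (1 - z₀ * Polynomial.aeval z₀ A.derivative))
    (hf0 : constantCoeff f = z₀) (hf : Function.IsFixedPt (deformationMap z₀ A B) f) {l : ℕ}
    (hY : (trunc (l + 1) f : L⟦X⟧) - C z₀ ∈ boundedCoeffs v 1)
    (hG : (trunc (l + 1) (potentialShift z₀ A B f) : L⟦X⟧) ∈ boundedCoeffs v 1) :
    v (coeff (l + 1) f) ≤ 1 := by
  set μ := Polynomial.aeval z₀ A.derivative
  set Y : L⟦X⟧ := ↑(trunc (l + 1) f)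
  set E := coeff (l + 1) (pexpL L (trunc (l + 1) (potentialShift z₀ A B f)))
  have hE : v E ≤ 1 := mem_boundedCoeffs.mp (pexpL_mem_boundedCoeffs hK hG) _
  have hFY : v (coeff (l + 1) (potentialShift z₀ A B Y)) ≤ v z₀ ^ n :=
    mem_boundedCoeffs.mp (potentialShift_mem_boundedCoeffs hK hz hA hB hY) _
  have hrec : (1 - z₀ * μ) * coeff (l + 1) f
      = z₀ * (coeff (l + 1) (potentialShift z₀ A B Y) + E) := by
    linear_combination coeff_succ_of_isFixedPt hf0 hf l
      + z₀ * (hasXAdicDerivAt_potentialShift (A := A) (B := B)).coeff_succ hf0 l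
  refine (mul_le_iff_le_one_right ((pow_pos (zero_lt_one.trans_le hz) _).trans_le hμ)).mp ?_
  calc v (1 - z₀ * μ) * v (coeff (l + 1) f)
      = v z₀ * v (coeff (l + 1) (potentialShift z₀ A B Y) + E) := by
        rw [← map_mul, hrec, map_mul]
    _ ≤ v z₀ * v z₀ ^ n := mul_le_mul' le_rfl (v.map_add_le hFY (hE.trans (one_le_pow₀ hz)))
    _ ≤ v (1 - z₀ * μ) := pow_succ' (v z₀) n ▸ hμ

theorem sub_C_mem_boundedCoeffs_of_isFixedPt
    (hμ : v z₀ ^ (n + 1) ≤ v (1 - z₀ * Polynomial.aeval z₀ A.derivative))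
    (hf0 : constantCoeff f = z₀) (hf : Function.IsFixedPt (deformationMap z₀ A B) f) :
    f - C z₀ ∈ boundedCoeffs v 1 := by
  set G := potentialShift z₀ A B f
  suffices h : ∀ l, v (coeff l (f - C z₀)) ≤ 1 ∧ v (coeff l G) ≤ 1 from
    mem_boundedCoeffs.mpr fun l => (h l).1
  intro l
  induction l using Nat.strong_induction_on with
  | _ l ih =>
  obtain _ | l := l
  · simp [coeff_zero_eq_constantCoeff_apply, hf0, G, constantCoeff_potentialShift hf0]
  have hY : (trunc (l + 1) f : L⟦X⟧) - C z₀ ∈ boundedCoeffs v 1 := by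
    have h := coe_trunc_mem_boundedCoeffs fun m hm => (ih m hm).1
    rwa [trunc_sub, trunc_C, Polynomial.coe_sub, Polynomial.coe_C] at h
  have hG := coe_trunc_mem_boundedCoeffs fun m hm => (ih m hm).2
  have hfl := valuation_coeff_succ_le_one_of_isFixedPt hK hz hA hB hμ hf0 hf hY hG
  set E := coeff (l + 1) (pexpL L (trunc (l + 1) G))
  have hE : v E ≤ 1 := mem_boundedCoeffs.mp (pexpL_mem_boundedCoeffs hK hG) _
  have hEG : v (E + coeff (l + 1) G) ≤ 1 := by
    refine (le_mul_of_one_le_left' hz).trans ?_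
    rwa [← map_mul, ← coeff_succ_of_isFixedPt hf0 hf l]
  exact ⟨by simpa using hfl, by simpa using v.map_sub_le hEG hE⟩

end Integrality

end Deformation

end PowerSeries

namespace Polynomial

variable {R : Type*} [Semiring R]

theorem natDegree_sum_Icc_C_mul_X_pow_le (a : ℕ → R) (m n : ℕ) :
    (∑ i ∈ Finset.Icc m n, C (a i) * X ^ i).natDegree ≤ n :=
  natDegree_sum_le_of_forall_le _ _ fun _ hi =>
    (natDegree_C_mul_X_pow_le _ _).trans (Finset.mem_Icc.mp hi).2

theorem natDegree_sum_Icc_C_mul_X_pow {a : ℕ → R} {m n : ℕ} (hmn : m ≤ n) (ha : a n ≠ 0) :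
    (∑ i ∈ Finset.Icc m n, C (a i) * X ^ i).natDegree = n := by
  refine natDegree_eq_of_le_of_coeff_ne_zero (natDegree_sum_Icc_C_mul_X_pow_le a m n) ?_
  simpa [finsetSum_coeff, coeff_C_mul_X_pow, hmn] using ha

end Polynomial

theorem cK_eq_algebraMap {K : Type*} [Field K] (a : K) :
    cK K a = algebraMap K (PowerSeries (LaurentSeries K)) a := by
  rw [cK, RingHom.comp_apply, PowerSeries.algebraMap_apply, LaurentSeries.algebraMap_apply]

theorem aeval_sum_C_mul_X_pow_eq_sum_cK {K : Type*} [Field K] (a : ℕ → K) (I : Finset ℕ)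
    (f : PowerSeries (LaurentSeries K)) :
    Polynomial.aeval f (∑ i ∈ I, Polynomial.C (a i) * Polynomial.X ^ i)
      = ∑ i ∈ I, cK K (a i) * f ^ i := by
  simp [cK_eq_algebraMap]

namespace LaurentSeries

open PowerSeries

variable {K : Type*} [Field K]

theorem valuation_algebraMap_le_one (a : K) :
    Valued.v (algebraMap K (LaurentSeries K) a) ≤ 1 := by
  rw [algebraMap_apply, val_le_one_iff_eq_coe]
  exact ⟨PowerSeries.C a, coe_C a⟩

theorem one_lt_valuation_zElem : 1 < Valued.v (zElem K) := by
  rw [zElem, valuation_single_zpow, neg_neg, ← WithZero.exp_zero, WithZero.exp_lt_exp]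
  exact one_pos

variable [CharZero K] {A B : Polynomial K}

theorem valuation_one_sub_mul_aeval_derivative (hA : 1 ≤ A.natDegree) :
    Valued.v (1 - zElem K * Polynomial.aeval (zElem K) A.derivative)
      = Valued.v (zElem K) ^ A.natDegree := by
  have hA' : A.derivative ≠ 0 := by
    rw [Ne, Polynomial.derivative_eq_zero]; omega
  have h : Valued.v (zElem K * Polynomial.aeval (zElem K) A.derivative)
      = Valued.v (zElem K) ^ A.natDegree := by
    rw [map_mul, Valuation.map_aeval_eq_pow_natDegree valuation_algebraMap_le_one
      one_lt_valuation_zElem hA', Polynomial.natDegree_derivative, ← pow_succ',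
      Nat.sub_add_cancel hA]
  have h1 : Valued.v (1 : LaurentSeries K)
      < Valued.v (zElem K * Polynomial.aeval (zElem K) A.derivative) := by
    rw [h, map_one]
    exact one_lt_pow₀ one_lt_valuation_zElem (by omega)
  rw [Valuation.map_sub_eq_of_lt_right _ h1, h]

theorem existsUnique_isFixedPt_deformationMap (hA : 1 ≤ A.natDegree) :
    ∃! f, constantCoeff f = zElem K ∧ Function.IsFixedPt (deformationMap (zElem K) A B) f := by
  refine PowerSeries.existsUnique_isFixedPt_deformationMap fun h1 => ?_
  have h := valuation_one_sub_mul_aeval_derivative hA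
  rw [h1, sub_self, map_zero] at h
  exact pow_ne_zero _ (zero_lt_one.trans one_lt_valuation_zElem).ne' h.symm

theorem coeff_sub_C_mem_range_of_isFixedPt (hA : 1 ≤ A.natDegree)
    (hB : B.natDegree < A.natDegree) {f : (LaurentSeries K)⟦X⟧} (hf0 : constantCoeff f = zElem K)
    (hf : Function.IsFixedPt (deformationMap (zElem K) A B) f) (l : ℕ) :
    coeff l (f - C (zElem K)) ∈ Set.range (HahnSeries.ofPowerSeries ℤ K) := by
  have h := sub_C_mem_boundedCoeffs_of_isFixedPt (n := A.natDegree - 1)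
    valuation_algebraMap_le_one one_lt_valuation_zElem.le (by omega) (by omega)
    (by rw [valuation_one_sub_mul_aeval_derivative hA, Nat.sub_add_cancel hA]) hf0 hf
  exact (val_le_one_iff_eq_coe K _).mp (mem_boundedCoeffs.mp h l)

end LaurentSeries

theorem statement7 (K : Type*) [Field K] [CharZero K] (s d : ℕ) (hs : 1 ≤ s) (hd : 2 ≤ d)
    (q p : ℕ → K) (σ pd : K) (hne : σ * pd * q s ≠ 0) :
    -- `Q(Y) = Σ_{i=1}^s q_i Y^i`, `P̃(Y) = Σ_{j=1}^{d−1} p_j Y^j`,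
    -- evaluated on elements of `R = L⟦t⟧`:
    let L := LaurentSeries K
    let z : PowerSeries L := PowerSeries.C (zElem K)
    let Q : PowerSeries L → PowerSeries L := fun Y => ∑ i ∈ Finset.Icc 1 s, cK K (q i) * Y ^ i
    let Pt : PowerSeries L → PowerSeries L :=
      fun Y => ∑ j ∈ Finset.Icc 1 (d - 1), cK K (p j) * Y ^ j
    let SatEq : PowerSeries L → Prop := fun Z =>
      PowerSeries.constantCoeff Z = zElem K ∧
        Z = z * pexpL L
          (cK K σ * cK K pd * (Q Z ^ d - Q z ^ d) + PowerSeries.X * cK K σ * Pt (Q Z))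
    (∃! Z : PowerSeries L, SatEq Z) ∧
      ∀ Z : PowerSeries L, SatEq Z → ∀ l : ℕ,
        PowerSeries.coeff l (Z - z) ∈ Set.range (HahnSeries.ofPowerSeries ℤ K) := by
  intro L z Q Pt SatEq
  obtain ⟨hσpd, hqs⟩ := mul_ne_zero_iff.mp hne
  set Qk : Polynomial K := ∑ i ∈ Finset.Icc 1 s, Polynomial.C (q i) * Polynomial.X ^ i
  set Pk : Polynomial K := ∑ j ∈ Finset.Icc 1 (d - 1), Polynomial.C (p j) * Polynomial.X ^ j
  set A := Polynomial.C (σ * pd) * Qk ^ d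
  set B := Polynomial.C σ * Pk.comp Qk
  have hQ (Y : PowerSeries L) : Q Y = Polynomial.aeval Y Qk :=
    (aeval_sum_C_mul_X_pow_eq_sum_cK q _ Y).symm
  have hPt (Y : PowerSeries L) : Pt Y = Polynomial.aeval Y Pk :=
    (aeval_sum_C_mul_X_pow_eq_sum_cK p _ Y).symm
  have hSat (Z : PowerSeries L) : SatEq Z ↔ PowerSeries.constantCoeff Z = zElem K ∧
      Function.IsFixedPt (PowerSeries.deformationMap (zElem K) A B) Z := by
    simp only [SatEq, hQ, hPt, z, L, A, B, Function.IsFixedPt, PowerSeries.deformationMap,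
      PowerSeries.potentialShift, map_mul, map_pow,
      Polynomial.aeval_C, Polynomial.aeval_comp, cK_eq_algebraMap, eq_comm (a := Z)]
    ring_nf
  have hQk : Qk.natDegree = s := Polynomial.natDegree_sum_Icc_C_mul_X_pow hs hqs
  have hA : A.natDegree = d * s := by
    rw [Polynomial.natDegree_C_mul hσpd, Polynomial.natDegree_pow, hQk]
  have hA1 : 1 ≤ A.natDegree := by rw [hA]; nlinarith
  have hB : B.natDegree < A.natDegree := by
    rw [hA, ← hQk]
    refine (Polynomial.natDegree_C_mul_le _ _).trans_lt (Polynomial.natDegree_comp_le.trans_lt ?_)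
    exact Nat.mul_lt_mul_of_pos_right
      ((Polynomial.natDegree_sum_Icc_C_mul_X_pow_le _ _ _).trans_lt (by omega)) (hQk ▸ hs)
  refine ⟨by simpa only [hSat] using LaurentSeries.existsUnique_isFixedPt_deformationMap hA1,
    fun Z hZ l => ?_⟩
  rw [hSat] at hZ
  exact LaurentSeries.coeff_sub_C_mem_range_of_isFixedPt hA1 hB hZ.1 hZ.2 l
end
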